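/- arXiv:2104.11605 — 2 statements merged into one kernel-verified Lean document; each statement's English description precedes it below -/
import Mathlib

section
/- Let C ⊆ ℝ^N be open and convex, λ₁,…,λ_m positive weights summing to 1, points x₁,…,x_m in C and y₁ ≤ y₂ ≤ ⋯ ≤ y_m in C satisfying ∑_{k=1}^n λ_k x_k ≤ ∑_{k=1}^n λ_k y_k for all n < m and ∑_{k=1}^m λ_k x_k = ∑_{k=1}^m λ_k y_k (R↑-majorization). Then for every Gâteaux differentiable convex function Φ : C → ℝ with isotone gradient, ∑_{k=1}^m λ_k Φ(x_k) ≥ ∑_{k=1}^m λ_k Φ(y_k). -/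
/-!
By the gradient inequality, `Φ (x k) - Φ (y k) ≥ ∇Φ (y k) · (x k - y k)`, so it suffices that
`∑ λₖ ∇Φ(yₖ) · (xₖ - yₖ) ≥ 0`. Coordinatewise this is an Abel summation: the coefficients
`∂ᵢΦ(yₖ)` increase with `k` because `∇Φ` is isotone and the `yₖ` increase, while the partial sums
of `λₖ (xₖ - yₖ)` are `≤ 0` and their total is `0`.
-/

open Finset

theorem ConvexOn.fderiv_sub_le {E : Type*} [NormedAddCommGroup E] [NormedSpace ℝ E]
    {s : Set E} {f : E → ℝ} (hf : ConvexOn ℝ s f) {u v : E} (hu : u ∈ s) (hv : v ∈ s)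
    (hd : DifferentiableAt ℝ f v) :
    fderiv ℝ f v (u - v) ≤ f u - f v := by
  have hline : HasDerivAt (f ∘ AffineMap.lineMap (k := ℝ) v u) (fderiv ℝ f v (u - v)) 0 := by
    have hf' : HasFDerivAt f (fderiv ℝ f v) (AffineMap.lineMap v u (0 : ℝ)) := by
      simpa using hd.hasFDerivAt
    exact hf'.comp_hasDerivAt 0 AffineMap.hasDerivAt_lineMap
  have := (hf.comp_affineMap (AffineMap.lineMap (k := ℝ) v u)).le_slope_of_hasDerivAt
    (by simpa using hv) (by simpa using hu) one_pos hline
  simpa [slope_def_field] using this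

theorem Finset.sum_range_mul_nonneg_of_monotone {R : Type*} [CommRing R] [LinearOrder R]
    [IsStrictOrderedRing R] {m : ℕ} {c d : ℕ → R} (hc : ∀ k, k + 1 < m → c k ≤ c (k + 1))
    (hpart : ∀ n < m, ∑ k ∈ range n, d k ≤ 0) (htot : ∑ k ∈ range m, d k = 0) :
    0 ≤ ∑ k ∈ range m, c k * d k := by
  have h := sum_range_by_parts c d m
  simp only [smul_eq_mul] at h
  rw [h, htot, mul_zero, zero_sub, neg_nonneg]
  refine sum_nonpos fun k hk => ?_
  have hk1 : k + 1 < m := by rw [mem_range] at hk; omega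
  exact mul_nonpos_of_nonneg_of_nonpos (sub_nonneg.mpr (hc k hk1)) (hpart (k + 1) hk1)

theorem Finset.sum_range_apply_nonneg_of_monotone {R ι : Type*} [CommRing R] [LinearOrder R]
    [IsStrictOrderedRing R] [Fintype ι] [DecidableEq ι] {m : ℕ} {L : ℕ → (ι → R) →ₗ[R] R}
    {d : ℕ → ι → R} (hL : ∀ i k, k + 1 < m → L k (Pi.single i 1) ≤ L (k + 1) (Pi.single i 1))
    (hpart : ∀ n < m, ∑ k ∈ range n, d k ≤ 0) (htot : ∑ k ∈ range m, d k = 0) :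
    0 ≤ ∑ k ∈ range m, L k (d k) := by
  have hexpand : ∀ k, L k (d k) = ∑ i, L k (Pi.single i 1) * d k i := fun k => by
    conv_lhs => rw [pi_eq_sum_univ' (d k)]
    simp [mul_comm]
  simp_rw [hexpand]
  rw [sum_comm]
  refine sum_nonneg fun i _ => sum_range_mul_nonneg_of_monotone (hL i) (fun n hn => ?_) ?_
  · simpa [sum_apply] using hpart n hn i
  · simpa [sum_apply] using congrFun htot i

theorem stmt14_general (N m : ℕ) (C : Set (Fin N → ℝ))
    (w : ℕ → ℝ) (hw : ∀ k < m, 0 < w k)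
    (x y : ℕ → Fin N → ℝ) (hxC : ∀ k < m, x k ∈ C) (hyC : ∀ k < m, y k ∈ C)
    (hinc : ∀ i j, i ≤ j → j < m → y i ≤ y j)
    (hmaj : ∀ n < m, ∑ k ∈ Finset.range n, w k • x k ≤ ∑ k ∈ Finset.range n, w k • y k)
    (heq : ∑ k ∈ Finset.range m, w k • x k = ∑ k ∈ Finset.range m, w k • y k)
    (Φ : (Fin N → ℝ) → ℝ)
    (hdiff : ∀ z ∈ C, DifferentiableAt ℝ Φ z) (hconv : ConvexOn ℝ C Φ)
    (hgrad : ∀ u ∈ C, ∀ v ∈ C, u ≤ v →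
      ∀ i : Fin N, fderiv ℝ Φ u (Pi.single i 1) ≤ fderiv ℝ Φ v (Pi.single i 1)) :
    ∑ k ∈ Finset.range m, w k * Φ (y k) ≤ ∑ k ∈ Finset.range m, w k * Φ (x k) := by
  have hsum : ∀ n, ∑ k ∈ range n, w k • (x k - y k) =
      ∑ k ∈ range n, w k • x k - ∑ k ∈ range n, w k • y k := fun n => by
    simp only [smul_sub, sum_sub_distrib]
  have key : 0 ≤ ∑ k ∈ range m, fderiv ℝ Φ (y k) (w k • (x k - y k)) :=
    sum_range_apply_nonneg_of_monotone (L := fun k => (fderiv ℝ Φ (y k)).toLinearMap)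
      (fun i k hk => hgrad _ (hyC k (by omega)) _ (hyC (k + 1) hk) (hinc k (k + 1) k.le_succ hk) i)
      (fun n hn => by rw [hsum]; exact sub_nonpos.mpr (hmaj n hn))
      (by rw [hsum, heq, sub_self])
  have hterm : ∀ k ∈ range m,
      w k * Φ (y k) + fderiv ℝ Φ (y k) (w k • (x k - y k)) ≤ w k * Φ (x k) := fun k hk => by
    rw [mem_range] at hk
    have hgrad_ineq := hconv.fderiv_sub_le (hxC k hk) (hyC k hk) (hdiff _ (hyC k hk))
    rw [map_smul, smul_eq_mul]
    linarith [mul_le_mul_of_nonneg_left hgrad_ineq (hw k hk).le]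
  have := sum_le_sum hterm
  rw [sum_add_distrib] at this
  linarith

/-- R↑-majorization case: with `y₁ ≤ ⋯ ≤ y_m` increasing, the majorization inequality is
reversed: `∑ λₖ Φ(xₖ) ≥ ∑ λₖ Φ(yₖ)` for every Gâteaux differentiable convex `Φ` with
isotone gradient. -/
theorem stmt14 (N m : ℕ) (C : Set (Fin N → ℝ)) (hCo : IsOpen C) (hCc : Convex ℝ C)
    (w : ℕ → ℝ) (hw : ∀ k < m, 0 < w k)
    (hw1 : ∑ k ∈ Finset.range m, w k = 1)
    (x y : ℕ → Fin N → ℝ) (hxC : ∀ k < m, x k ∈ C) (hyC : ∀ k < m, y k ∈ C)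
    (hinc : ∀ i j, i ≤ j → j < m → y i ≤ y j)
    (hmaj : ∀ n < m, ∑ k ∈ Finset.range n, w k • x k ≤ ∑ k ∈ Finset.range n, w k • y k)
    (heq : ∑ k ∈ Finset.range m, w k • x k = ∑ k ∈ Finset.range m, w k • y k)
    (Φ : (Fin N → ℝ) → ℝ)
    (hdiff : ∀ z ∈ C, DifferentiableAt ℝ Φ z) (hconv : ConvexOn ℝ C Φ)
    (hgrad : ∀ u ∈ C, ∀ v ∈ C, u ≤ v →
      ∀ i : Fin N, fderiv ℝ Φ u (Pi.single i 1) ≤ fderiv ℝ Φ v (Pi.single i 1)) :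
    ∑ k ∈ Finset.range m, w k * Φ (y k) ≤ ∑ k ∈ Finset.range m, w k * Φ (x k) :=
  stmt14_general N m C w hw x y hxC hyC hinc hmaj heq Φ hdiff hconv hgrad
end

section
/- Let C ⊆ ℝ^N be open and convex and Φ : C → ℝ a differentiable convex function with isotone gradient. If x₁, x₂, y₁, y₂ ∈ C satisfy y₂ ≤ x₂ ≤ x₁ ≤ y₁ and (x₁ + x₂)/2 = (y₁ + y₂)/2, then Φ(x₁) + Φ(x₂) ≤ Φ(y₁) + Φ(y₂). -/
/-! Move `x₁` to `y₁` and `x₂` to `y₂` along straight lines at the same time. The midpoint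
condition makes the two velocities `d = y₁ - x₁ ≥ 0` and `-d`, so the sum of the values of `Φ`
has derivative `∇Φ(a t)·d - ∇Φ(b t)·d`, where `a t`, `b t` are the moving points. Since `b t ≤ a t`
throughout, the isotone gradient makes this nonnegative, and the sum increases from
`Φ x₁ + Φ x₂` to `Φ y₁ + Φ y₂`. -/

open Set AffineMap

lemma ContinuousLinearMap.apply_le_apply_of_single_le {ι : Type*} [Fintype ι] [DecidableEq ι]
    {L L' : (ι → ℝ) →L[ℝ] ℝ} (h : ∀ i, L (Pi.single i 1) ≤ L' (Pi.single i 1))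
    {w : ι → ℝ} (hw : 0 ≤ w) : L w ≤ L' w := by
  rw [← Finset.univ_sum_single w, map_sum, map_sum]
  gcongr with i
  have hsingle : Pi.single i (w i) = w i • (Pi.single i 1 : ι → ℝ) := by
    rw [← Pi.single_smul, smul_eq_mul, mul_one]
  rw [hsingle, map_smul, map_smul]
  exact smul_le_smul_of_nonneg_left (h i) (hw i)

theorem monotoneOn_add_comp_lineMap {ι : Type*} [Fintype ι] [DecidableEq ι]
    {C : Set (ι → ℝ)} {Φ : (ι → ℝ) → ℝ} (hC : Convex ℝ C)
    (hdiff : ∀ z ∈ C, DifferentiableAt ℝ Φ z)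
    (hgrad : ∀ u ∈ C, ∀ v ∈ C, u ≤ v →
      ∀ i, fderiv ℝ Φ u (Pi.single i 1) ≤ fderiv ℝ Φ v (Pi.single i 1))
    {x₁ x₂ y₁ y₂ : ι → ℝ} (hx₁ : x₁ ∈ C) (hx₂ : x₂ ∈ C) (hy₁ : y₁ ∈ C) (hy₂ : y₂ ∈ C)
    (hx : x₂ ≤ x₁) (hy : y₂ ≤ y₁) (hxy : x₁ ≤ y₁) (hsum : x₁ + x₂ = y₁ + y₂) :
    MonotoneOn (fun t : ℝ ↦ Φ (lineMap x₁ y₁ t) + Φ (lineMap x₂ y₂ t)) (Icc 0 1) := by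
  have hdir : y₂ - x₂ = -(y₁ - x₁) := by
    rw [neg_sub, sub_eq_sub_iff_add_eq_add, add_comm, hsum, add_comm]
  have hderiv : ∀ t ∈ Icc (0 : ℝ) 1,
      HasDerivAt (fun t : ℝ ↦ Φ (lineMap x₁ y₁ t) + Φ (lineMap x₂ y₂ t))
        (fderiv ℝ Φ (lineMap x₁ y₁ t) (y₁ - x₁) - fderiv ℝ Φ (lineMap x₂ y₂ t) (y₁ - x₁)) t := by
    intro t ht
    have h₁ := (hdiff _ (hC.lineMap_mem hx₁ hy₁ ht)).hasFDerivAt.comp_hasDerivAt t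
      hasDerivAt_lineMap
    have h₂ := (hdiff _ (hC.lineMap_mem hx₂ hy₂ ht)).hasFDerivAt.comp_hasDerivAt t
      hasDerivAt_lineMap
    rw [hdir, map_neg] at h₂
    exact h₁.add h₂
  refine monotoneOn_of_hasDerivWithinAt_nonneg (convex_Icc 0 1)
    (fun t ht ↦ (hderiv t ht).continuousAt.continuousWithinAt)
    (fun t ht ↦ (hderiv t (interior_subset ht)).hasDerivWithinAt) fun t ht ↦ ?_
  have ht := interior_subset ht
  exact sub_nonneg.2 <| ContinuousLinearMap.apply_le_apply_of_single_le
    (hgrad _ (hC.lineMap_mem hx₂ hy₂ ht) _ (hC.lineMap_mem hx₁ hy₁ ht)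
      (lineMap_mono_endpoints hx hy ht.1 ht.2)) (sub_nonneg.2 hxy)

theorem stmt17_general (N : ℕ) (C : Set (Fin N → ℝ)) (hCc : Convex ℝ C)
    (Φ : (Fin N → ℝ) → ℝ)
    (hdiff : ∀ z ∈ C, DifferentiableAt ℝ Φ z)
    (hgrad : ∀ u ∈ C, ∀ v ∈ C, u ≤ v →
      ∀ i : Fin N, fderiv ℝ Φ u (Pi.single i 1) ≤ fderiv ℝ Φ v (Pi.single i 1))
    (x₁ x₂ y₁ y₂ : Fin N → ℝ) (hx₁ : x₁ ∈ C) (hx₂ : x₂ ∈ C) (hy₁ : y₁ ∈ C) (hy₂ : y₂ ∈ C)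
    (h1 : y₂ ≤ x₂) (h2 : x₂ ≤ x₁) (h3 : x₁ ≤ y₁)
    (hmid : (2:ℝ)⁻¹ • (x₁ + x₂) = (2:ℝ)⁻¹ • (y₁ + y₂)) :
    Φ x₁ + Φ x₂ ≤ Φ y₁ + Φ y₂ := by
  have hsum : x₁ + x₂ = y₁ + y₂ := smul_right_injective _ (by norm_num) hmid
  have hmono := monotoneOn_add_comp_lineMap hCc hdiff hgrad hx₁ hx₂ hy₁ hy₂ h2
    (h1.trans (h2.trans h3)) h3 hsum
  simpa only [lineMap_apply_zero, lineMap_apply_one] using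
    hmono (left_mem_Icc.2 zero_le_one) (right_mem_Icc.2 zero_le_one) zero_le_one

/-- Generalized parallelogram law: for a differentiable convex `Φ` with isotone gradient
on an open convex `C ⊆ ℝ^N`, if `y₂ ≤ x₂ ≤ x₁ ≤ y₁` and `(x₁+x₂)/2 = (y₁+y₂)/2`, then
`Φ(x₁) + Φ(x₂) ≤ Φ(y₁) + Φ(y₂)`. -/
theorem stmt17 (N : ℕ) (C : Set (Fin N → ℝ)) (hCo : IsOpen C) (hCc : Convex ℝ C)
    (Φ : (Fin N → ℝ) → ℝ)
    (hdiff : ∀ z ∈ C, DifferentiableAt ℝ Φ z) (hconv : ConvexOn ℝ C Φ)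
    (hgrad : ∀ u ∈ C, ∀ v ∈ C, u ≤ v →
      ∀ i : Fin N, fderiv ℝ Φ u (Pi.single i 1) ≤ fderiv ℝ Φ v (Pi.single i 1))
    (x₁ x₂ y₁ y₂ : Fin N → ℝ) (hx₁ : x₁ ∈ C) (hx₂ : x₂ ∈ C) (hy₁ : y₁ ∈ C) (hy₂ : y₂ ∈ C)
    (h1 : y₂ ≤ x₂) (h2 : x₂ ≤ x₁) (h3 : x₁ ≤ y₁)
    (hmid : (2:ℝ)⁻¹ • (x₁ + x₂) = (2:ℝ)⁻¹ • (y₁ + y₂)) :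
    Φ x₁ + Φ x₂ ≤ Φ y₁ + Φ y₂ :=
  stmt17_general N C hCc Φ hdiff hgrad x₁ x₂ y₁ y₂ hx₁ hx₂ hy₁ hy₂ h1 h2 h3 hmid
end
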